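/- arXiv:1609.02359 — 7 statements merged into one kernel-verified Lean document; each statement's English description precedes it below -/
import Mathlib

section
/- Let every connected component of the graph on Fin c, in which k and i are adjacent iff M k i > 0, contain at least one vertex k with m k > 0. Then for every integer vector q ∈ ℤ^c, the set {ε ∈ D : A_k(ε) = 2π·q k for all k = 1,…,c} contains at most one point (it is a subsingleton); equivalently, the quantization function A is injective on D. -/
open Real

/-- The quantization function component `A_k(ε) = m_k·arcsin(ε_k) + ∑_i M_{ki}·arcsin(ε_k − ε_i)`. -/
noncomputable def quantA (c : ℕ) (m : Fin c → ℕ) (M : Fin c → Fin c → ℕ)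
    (k : Fin c) (ε : Fin c → ℝ) : ℝ :=
  (m k : ℝ) * Real.arcsin (ε k) + ∑ i, (M k i : ℝ) * Real.arcsin (ε k - ε i)

/-- The domain `D_G` of vortex flow vectors. -/
def domD (c : ℕ) (m : Fin c → ℕ) (M : Fin c → Fin c → ℕ) : Set (Fin c → ℝ) :=
  {ε | (∀ k, 0 < m k → |ε k| ≤ 1) ∧ ∀ k i, 0 < M k i → |ε k - ε i| ≤ 1}

private lemma quant_key (c : ℕ) (m : Fin c → ℕ) (M : Fin c → Fin c → ℕ)
    (ε ε' : Fin c → ℝ) (hε : ε ∈ domD c m M) (hε' : ε' ∈ domD c m M)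
    (a : Fin c) (hmax : ∀ i, ε i - ε' i ≤ ε a - ε' a) (ht : 0 ≤ ε a - ε' a)
    (hA : quantA c m M a ε = quantA c m M a ε') :
    (0 < m a → ε a = ε' a) ∧ ∀ b, 0 < M a b → ε b - ε' b = ε a - ε' a := by
  simp only [quantA] at hA
  have h1 : (0:ℝ) ≤ (m a : ℝ) * (Real.arcsin (ε a) - Real.arcsin (ε' a)) := by
    have : Real.arcsin (ε' a) ≤ Real.arcsin (ε a) := Real.monotone_arcsin (by linarith)
    exact mul_nonneg (Nat.cast_nonneg _) (by linarith)
  have h2 : ∀ i ∈ Finset.univ, (0:ℝ) ≤ (M a i : ℝ) *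
      (Real.arcsin (ε a - ε i) - Real.arcsin (ε' a - ε' i)) := by
    intro i _
    have := hmax i
    have : Real.arcsin (ε' a - ε' i) ≤ Real.arcsin (ε a - ε i) :=
      Real.monotone_arcsin (by linarith)
    exact mul_nonneg (Nat.cast_nonneg _) (by linarith)
  have hsum : (m a : ℝ) * (Real.arcsin (ε a) - Real.arcsin (ε' a))
      + ∑ i, (M a i : ℝ) * (Real.arcsin (ε a - ε i) - Real.arcsin (ε' a - ε' i)) = 0 := by
    simp only [mul_sub, Finset.sum_sub_distrib]
    linarith [hA]
  have hs0 : ∑ i, (M a i : ℝ) * (Real.arcsin (ε a - ε i) - Real.arcsin (ε' a - ε' i)) = 0 := by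
    have := Finset.sum_nonneg h2
    linarith
  have h10 : (m a : ℝ) * (Real.arcsin (ε a) - Real.arcsin (ε' a)) = 0 := by linarith
  have heach := (Finset.sum_eq_zero_iff_of_nonneg h2).mp hs0
  constructor
  · intro hma
    have hne : (m a : ℝ) ≠ 0 := by positivity
    have harc : Real.arcsin (ε a) = Real.arcsin (ε' a) := by
      rcases mul_eq_zero.mp h10 with h | h
      · exact absurd h hne
      · linarith
    have d1 := abs_le.mp (hε.1 a hma)
    have d2 := abs_le.mp (hε'.1 a hma)
    exact Real.injOn_arcsin ⟨d1.1, d1.2⟩ ⟨d2.1, d2.2⟩ harc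
  · intro b hb
    have hne : (M a b : ℝ) ≠ 0 := by positivity
    have harc : Real.arcsin (ε a - ε b) = Real.arcsin (ε' a - ε' b) := by
      rcases mul_eq_zero.mp (heach b (Finset.mem_univ b)) with h | h
      · exact absurd h hne
      · linarith
    have d1 := abs_le.mp (hε.2 a b hb)
    have d2 := abs_le.mp (hε'.2 a b hb)
    have := Real.injOn_arcsin ⟨d1.1, d1.2⟩ ⟨d2.1, d2.2⟩ harc
    linarith

private lemma quant_le (c : ℕ) (hc : 1 ≤ c) (m : Fin c → ℕ) (M : Fin c → Fin c → ℕ)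
    (hconn : ∀ k : Fin c, ∃ k' : Fin c, 0 < m k' ∧
      Relation.ReflTransGen (fun a b : Fin c => a ≠ b ∧ 0 < M a b) k k')
    (ε ε' : Fin c → ℝ) (hε : ε ∈ domD c m M) (hε' : ε' ∈ domD c m M)
    (hA : ∀ k, quantA c m M k ε = quantA c m M k ε') :
    ∀ j, ε j ≤ ε' j := by
  haveI : NeZero c := ⟨by omega⟩
  have hne : (Finset.univ : Finset (Fin c)).Nonempty := Finset.univ_nonempty
  set t := Finset.univ.sup' hne (fun i => ε i - ε' i) with hts
  obtain ⟨a, -, ha⟩ := Finset.exists_mem_eq_sup' hne (fun i => ε i - ε' i)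
  have hmax : ∀ i, ε i - ε' i ≤ t := fun i => Finset.le_sup' (fun i => ε i - ε' i) (Finset.mem_univ i)
  suffices h : t ≤ 0 by intro j; linarith [hmax j]
  rcases le_or_gt t 0 with h | h
  · exact h
  obtain ⟨k', hm, hchain⟩ := hconn a
  have key : ∀ b, Relation.ReflTransGen (fun a b : Fin c => a ≠ b ∧ 0 < M a b) a b →
      ε b - ε' b = t := by
    intro b hb
    induction hb with
    | refl => exact ha.symm
    | @tail x y hx hxy ih =>
      have hx' : ε x - ε' x = t := ih
      have := (quant_key c m M ε ε' hε hε' x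
        (fun i => by rw [hx']; exact hmax i) (by linarith) (hA x)).2 y hxy.2
      linarith
  have hk' : ε k' - ε' k' = t := key k' hchain
  have := (quant_key c m M ε ε' hε hε' k'
    (fun i => by rw [hk']; exact hmax i) (by linarith) (hA k')).1 hm
  linarith

theorem level_sets_intersect_in_at_most_one_point
    (c : ℕ) (hc : 1 ≤ c) (m : Fin c → ℕ) (M : Fin c → Fin c → ℕ)
    (hsym : ∀ k i, M k i = M i k) (hdiag : ∀ k, M k k = 0)
    (hconn : ∀ k : Fin c, ∃ k' : Fin c, 0 < m k' ∧
      Relation.ReflTransGen (fun a b : Fin c => a ≠ b ∧ 0 < M a b) k k') :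
    (∀ q : Fin c → ℤ,
      Set.Subsingleton
        {ε ∈ domD c m M | ∀ k, quantA c m M k ε = 2 * π * (q k : ℝ)}) ∧
    Set.InjOn (fun ε k => quantA c m M k ε) (domD c m M) := by
  have hinj : Set.InjOn (fun ε k => quantA c m M k ε) (domD c m M) := by
    intro ε hε ε' hε' h
    have hA : ∀ k, quantA c m M k ε = quantA c m M k ε' := fun k => congrFun h k
    have h1 := quant_le c hc m M hconn ε ε' hε hε' hA
    have h2 := quant_le c hc m M hconn ε' ε hε' hε (fun k => (hA k).symm)
    funext j
    exact le_antisymm (h1 j) (h2 j)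
  refine ⟨fun q ε hε ε' hε' => ?_, hinj⟩
  exact hinj hε.1 hε'.1 (funext fun k => (hε.2 k).trans (hε'.2 k).symm)
end

section
/- Assume every connected component of the graph on Fin c, in which k and i are adjacent iff M k i > 0, contains at least one vertex k with m k > 0. Then the set {ε ∈ D : for every k there exists q ∈ ℤ with A_k(ε) = 2π·q} is finite and has cardinality at most ∏_{k=1}^{c} (2·⌊n_k/4⌋ + 1). -/
open Real

/-- arcsin is monotone, so this product is nonneg. -/
lemma arcsin_mono_prod (a b : ℝ) : 0 ≤ (Real.arcsin a - Real.arcsin b) * (a - b) := by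
  rcases le_total a b with h | h
  · have := Real.monotone_arcsin h
    nlinarith
  · have := Real.monotone_arcsin h
    exact mul_nonneg (by linarith) (by linarith)

lemma arcsin_prod_eq_zero {a b : ℝ} (ha : |a| ≤ 1) (hb : |b| ≤ 1)
    (h : (Real.arcsin a - Real.arcsin b) * (a - b) = 0) : a = b := by
  rcases mul_eq_zero.mp h with h' | h'
  · have ha' := abs_le.mp ha
    have hb' := abs_le.mp hb
    exact Real.injOn_arcsin ⟨ha'.1, ha'.2⟩ ⟨hb'.1, hb'.2⟩ (by linarith)
  · linarith

/-- Injectivity of the quantization map on the domain. -/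
lemma quantA_injOn (c : ℕ) (m : Fin c → ℕ) (M : Fin c → Fin c → ℕ)
    (hsym : ∀ k i, M k i = M i k)
    (hconn : ∀ k : Fin c, ∃ k' : Fin c, 0 < m k' ∧
      Relation.ReflTransGen (fun a b : Fin c => a ≠ b ∧ 0 < M a b) k k')
    (ε ε' : Fin c → ℝ) (hε : ε ∈ domD c m M) (hε' : ε' ∈ domD c m M)
    (hA : ∀ k, quantA c m M k ε = quantA c m M k ε') : ε = ε' := by
  classical
  set w : Fin c → ℝ := fun k =>
    (Real.arcsin (ε k) - Real.arcsin (ε' k)) * (ε k - ε' k) with hw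
  set t : Fin c → Fin c → ℝ := fun k i =>
    (M k i : ℝ) * ((Real.arcsin (ε k - ε i) - Real.arcsin (ε' k - ε' i)) * (ε k - ε' k)) with ht
  set v : Fin c → Fin c → ℝ := fun k i =>
    (Real.arcsin (ε k - ε i) - Real.arcsin (ε' k - ε' i)) *
      ((ε k - ε i) - (ε' k - ε' i)) with hv
  -- expansion of (A_k ε - A_k ε') * (ε k - ε' k)
  have expand : ∀ k, (0 : ℝ) = (m k : ℝ) * w k + ∑ i, t k i := by
    intro k
    have h0 : (quantA c m M k ε - quantA c m M k ε') * (ε k - ε' k) = 0 := by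
      rw [hA k]; ring
    rw [← h0]
    have hts : ∑ i, t k i =
        (∑ i, (M k i : ℝ) * Real.arcsin (ε k - ε i)) * (ε k - ε' k) -
          (∑ i, (M k i : ℝ) * Real.arcsin (ε' k - ε' i)) * (ε k - ε' k) := by
      rw [Finset.sum_mul, Finset.sum_mul, ← Finset.sum_sub_distrib]
      exact Finset.sum_congr rfl fun i _ => by simp only [ht]; ring
    rw [hts]
    simp only [quantA, hw]
    ring
  have total : (0 : ℝ) = ∑ k, (m k : ℝ) * w k + ∑ k, ∑ i, t k i := by
    rw [← Finset.sum_add_distrib]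
    simpa using Finset.sum_congr rfl fun k _ => expand k
  -- symmetrization
  have pair : ∀ k i, t k i + t i k = (M k i : ℝ) * v k i := by
    intro k i
    simp only [ht, hv]
    rw [hsym i k]
    rw [show ε i - ε k = -(ε k - ε i) by ring, show ε' i - ε' k = -(ε' k - ε' i) by ring,
      Real.arcsin_neg, Real.arcsin_neg]
    ring
  have double : 2 * (∑ k, ∑ i, t k i) = ∑ k, ∑ i, (M k i : ℝ) * v k i := by
    have hcomm : ∑ k, ∑ i, t k i = ∑ k, ∑ i, t i k := Finset.sum_comm
    calc 2 * (∑ k, ∑ i, t k i) = ∑ k, ∑ i, t k i + ∑ k, ∑ i, t i k := by rw [← hcomm]; ring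
      _ = ∑ k, (∑ i, t k i + ∑ i, t i k) := (Finset.sum_add_distrib).symm
      _ = ∑ k, ∑ i, (t k i + t i k) :=
            Finset.sum_congr rfl fun k _ => (Finset.sum_add_distrib).symm
      _ = ∑ k, ∑ i, (M k i : ℝ) * v k i :=
            Finset.sum_congr rfl fun k _ => Finset.sum_congr rfl fun i _ => pair k i
  have hwnn : ∀ k, 0 ≤ (m k : ℝ) * w k := fun k =>
    mul_nonneg (Nat.cast_nonneg _) (arcsin_mono_prod _ _)
  have hvnn : ∀ k i, 0 ≤ (M k i : ℝ) * v k i := fun k i =>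
    mul_nonneg (Nat.cast_nonneg _) (arcsin_mono_prod _ _)
  have hsum1 : 0 ≤ ∑ k, (m k : ℝ) * w k := Finset.sum_nonneg fun k _ => hwnn k
  have hsum2 : 0 ≤ ∑ k, ∑ i, (M k i : ℝ) * v k i :=
    Finset.sum_nonneg fun k _ => Finset.sum_nonneg fun i _ => hvnn k i
  have ht2 : 0 ≤ ∑ k, ∑ i, t k i := by nlinarith [double, hsum2]
  have hsum1z : ∑ k, (m k : ℝ) * w k = 0 := by linarith [total]
  have hsum2z : ∑ k, ∑ i, (M k i : ℝ) * v k i = 0 := by nlinarith [double, total]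
  -- each term vanishes
  have hweach : ∀ k, (m k : ℝ) * w k = 0 := by
    intro k
    have := (Finset.sum_eq_zero_iff_of_nonneg (fun k _ => hwnn k)).mp hsum1z
    exact this k (Finset.mem_univ k)
  have hveach : ∀ k i, (M k i : ℝ) * v k i = 0 := by
    intro k i
    have h1 := (Finset.sum_eq_zero_iff_of_nonneg
      (fun k _ => Finset.sum_nonneg fun i _ => hvnn k i)).mp hsum2z k (Finset.mem_univ k)
    exact (Finset.sum_eq_zero_iff_of_nonneg (fun i _ => hvnn k i)).mp h1 i (Finset.mem_univ i)
  -- consequences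
  have hm_eq : ∀ k, 0 < m k → ε k = ε' k := by
    intro k hk
    have hmk : (m k : ℝ) ≠ 0 := Nat.cast_ne_zero.mpr hk.ne'
    have hwz : w k = 0 := by
      rcases mul_eq_zero.mp (hweach k) with h | h
      · exact absurd h hmk
      · exact h
    exact arcsin_prod_eq_zero (hε.1 k hk) (hε'.1 k hk) hwz
  have hM_eq : ∀ k i, 0 < M k i → ε k - ε' k = ε i - ε' i := by
    intro k i hki
    have hMk : (M k i : ℝ) ≠ 0 := Nat.cast_ne_zero.mpr hki.ne'
    have hvz : v k i = 0 := by
      rcases mul_eq_zero.mp (hveach k i) with h | h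
      · exact absurd h hMk
      · exact h
    have := arcsin_prod_eq_zero (hε.2 k i hki) (hε'.2 k i hki) hvz
    linarith
  -- conclude via connectivity
  funext k
  obtain ⟨k', hk', hpath⟩ := hconn k
  have hδ : ∀ a b : Fin c,
      Relation.ReflTransGen (fun a b : Fin c => a ≠ b ∧ 0 < M a b) a b →
      ε a - ε' a = ε b - ε' b := by
    intro a b h
    induction h with
    | refl => rfl
    | tail _ hstep ih => rw [ih]; exact hM_eq _ _ hstep.2
  have h1 : ε k - ε' k = ε k' - ε' k' := hδ k k' hpath
  have h2 : ε k' = ε' k' := hm_eq k' hk'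
  have : ε k - ε' k = 0 := by rw [h1, h2]; ring
  linarith

/-- Bound on the quantization values. -/
lemma quantA_abs_le (c : ℕ) (m : Fin c → ℕ) (M : Fin c → Fin c → ℕ)
    (k : Fin c) (ε : Fin c → ℝ) :
    |quantA c m M k ε| ≤ ((m k : ℝ) + ∑ i, (M k i : ℝ)) * (π / 2) := by
  have habs : ∀ x : ℝ, |Real.arcsin x| ≤ π / 2 := fun x =>
    abs_le.mpr ⟨(Real.arcsin_mem_Icc x).1, (Real.arcsin_mem_Icc x).2⟩
  have hπ : 0 ≤ π / 2 := by positivity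
  calc |quantA c m M k ε|
      ≤ |(m k : ℝ) * Real.arcsin (ε k)| + |∑ i, (M k i : ℝ) * Real.arcsin (ε k - ε i)| :=
        abs_add_le _ _
    _ ≤ (m k : ℝ) * (π / 2) + ∑ i, (M k i : ℝ) * (π / 2) := by
        gcongr ?_ + ?_
        · rw [abs_mul, Nat.abs_cast]
          exact mul_le_mul_of_nonneg_left (habs _) (Nat.cast_nonneg _)
        · refine (Finset.abs_sum_le_sum_abs _ _).trans ?_
          refine Finset.sum_le_sum fun i _ => ?_
          rw [abs_mul, Nat.abs_cast]
          exact mul_le_mul_of_nonneg_left (habs _) (Nat.cast_nonneg _)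
    _ = ((m k : ℝ) + ∑ i, (M k i : ℝ)) * (π / 2) := by rw [add_mul, Finset.sum_mul]

theorem bound_on_number_of_quantized_vortex_flows
    (c : ℕ) (hc : 1 ≤ c) (m : Fin c → ℕ) (M : Fin c → Fin c → ℕ)
    (hsym : ∀ k i, M k i = M i k) (hdiag : ∀ k, M k k = 0)
    (hconn : ∀ k : Fin c, ∃ k' : Fin c, 0 < m k' ∧
      Relation.ReflTransGen (fun a b : Fin c => a ≠ b ∧ 0 < M a b) k k') :
    {ε ∈ domD c m M | ∀ k, ∃ q : ℤ, quantA c m M k ε = 2 * π * (q : ℝ)}.Finite ∧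
    {ε ∈ domD c m M | ∀ k, ∃ q : ℤ, quantA c m M k ε = 2 * π * (q : ℝ)}.ncard ≤
      ∏ k, (2 * ((m k + ∑ i, M k i) / 4) + 1) := by
  classical
  set S := {ε ∈ domD c m M | ∀ k, ∃ q : ℤ, quantA c m M k ε = 2 * π * (q : ℝ)} with hS
  set n : Fin c → ℕ := fun k => m k + ∑ i, M k i with hn
  set F : Finset (Fin c → ℤ) :=
    Fintype.piFinset (fun k => Finset.Icc (-((n k / 4 : ℕ) : ℤ)) ((n k / 4 : ℕ) : ℤ)) with hF
  -- the quantization integers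
  set Q : (Fin c → ℝ) → (Fin c → ℤ) := fun ε k =>
    if h : ∃ q : ℤ, quantA c m M k ε = 2 * π * (q : ℝ) then h.choose else 0 with hQ
  have hQspec : ∀ ε ∈ S, ∀ k, quantA c m M k ε = 2 * π * (Q ε k : ℝ) := by
    intro ε hε k
    obtain ⟨-, h2⟩ := hε
    have h := h2 k
    simp only [hQ, dif_pos h]
    exact h.choose_spec
  have hπ : (0 : ℝ) < π := Real.pi_pos
  -- Q maps S into F
  have hmaps : ∀ ε ∈ S, Q ε ∈ F := by
    intro ε hε
    rw [hF, Fintype.mem_piFinset]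
    intro k
    have hb := quantA_abs_le c m M k ε
    rw [hQspec ε hε k] at hb
    have hcast : ((m k : ℝ) + ∑ i, (M k i : ℝ)) = (n k : ℝ) := by
      rw [hn]; push_cast; ring
    rw [hcast] at hb
    have habs : |(Q ε k : ℝ)| * (2 * π) ≤ (n k : ℝ) * (π / 2) := by
      calc |(Q ε k : ℝ)| * (2 * π) = |2 * π * (Q ε k : ℝ)| := by
            rw [abs_mul, abs_of_pos (by linarith : (0:ℝ) < 2 * π)]; ring
        _ ≤ (n k : ℝ) * (π / 2) := hb
    have h4 : (|Q ε k| : ℝ) * 4 ≤ (n k : ℝ) := by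
      push_cast [Int.cast_abs]
      nlinarith [habs, hπ]
    have h4' : |Q ε k| * 4 ≤ (n k : ℤ) := by exact_mod_cast h4
    have hq1 : Q ε k * 4 ≤ (n k : ℤ) := by
      have := le_abs_self (Q ε k); nlinarith
    have hq2 : -(n k : ℤ) ≤ Q ε k * 4 := by
      have := neg_abs_le (Q ε k); nlinarith
    rw [Finset.mem_Icc]
    omega
  -- Q is injective on S
  have hinj : Set.InjOn Q S := by
    intro ε hε ε' hε' hQeq
    refine quantA_injOn c m M hsym hconn ε ε' hε.1 hε'.1 fun k => ?_
    rw [hQspec ε hε k, hQspec ε' hε' k, hQeq]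
  -- finiteness
  have himg : Q '' S ⊆ ↑F := by
    rintro - ⟨ε, hε, rfl⟩
    exact hmaps ε hε
  have himgfin : (Q '' S).Finite := F.finite_toSet.subset himg
  have hfin : S.Finite := Set.Finite.of_finite_image himgfin hinj
  refine ⟨hfin, ?_⟩
  have hcard1 : S.ncard = (Q '' S).ncard := (Set.ncard_image_of_injOn hinj).symm
  have hcard2 : (Q '' S).ncard ≤ F.card := by
    have := Set.ncard_le_ncard himg F.finite_toSet
    simpa using this
  have hcard3 : F.card = ∏ k, (2 * (n k / 4) + 1) := by
    rw [hF, Fintype.card_piFinset]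
    refine Finset.prod_congr rfl fun k _ => ?_
    rw [Int.card_Icc]
    omega
  calc S.ncard = (Q '' S).ncard := hcard1
    _ ≤ F.card := hcard2
    _ = ∏ k, (2 * (n k / 4) + 1) := hcard3
end

section
/- Assume every connected component of the graph on Fin c, in which k and i are adjacent iff M k i > 0, contains at least one vertex k with m k > 0. Let η, μ ∈ D be distinct and set ξ := μ − η; assume the maximum component of ξ is positive and is attained at k₀, and that either m k₀ > 0 or there exists i with M k₀ i > 0 and ξ i < ξ k₀. Then A_{k₀}(μ) > A_{k₀}(η). -/
open Real

theorem quantization_function_strictly_increases_along_segment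
    (c : ℕ) (hc : 1 ≤ c) (m : Fin c → ℕ) (M : Fin c → Fin c → ℕ)
    (hsym : ∀ k i, M k i = M i k) (hdiag : ∀ k, M k k = 0)
    (hconn : ∀ k : Fin c, ∃ k' : Fin c, 0 < m k' ∧
      Relation.ReflTransGen (fun a b : Fin c => a ≠ b ∧ 0 < M a b) k k')
    (η μ : Fin c → ℝ) (hη : η ∈ domD c m M) (hμ : μ ∈ domD c m M) (hne : η ≠ μ)
    (k₀ : Fin c)
    (hmax : ∀ i, μ i - η i ≤ μ k₀ - η k₀)
    (hpos : 0 < μ k₀ - η k₀)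
    (hcase : 0 < m k₀ ∨ ∃ i, 0 < M k₀ i ∧ μ i - η i < μ k₀ - η k₀) :
    quantA c m M k₀ η < quantA c m M k₀ μ := by
  have hsumle : ∀ i : Fin c, (M k₀ i : ℝ) * Real.arcsin (η k₀ - η i)
      ≤ (M k₀ i : ℝ) * Real.arcsin (μ k₀ - μ i) := by
    intro i
    apply mul_le_mul_of_nonneg_left _ (Nat.cast_nonneg _)
    apply Real.monotone_arcsin
    have := hmax i; linarith
  have hm1 : (m k₀ : ℝ) * Real.arcsin (η k₀) ≤ (m k₀ : ℝ) * Real.arcsin (μ k₀) := by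
    apply mul_le_mul_of_nonneg_left _ (Nat.cast_nonneg _)
    apply Real.monotone_arcsin; linarith
  unfold quantA
  rcases hcase with hm | ⟨i, hMi, hlt⟩
  · have hηb := hη.1 k₀ hm
    have hμb := hμ.1 k₀ hm
    rw [abs_le] at hηb hμb
    have : Real.arcsin (η k₀) < Real.arcsin (μ k₀) :=
      Real.strictMonoOn_arcsin ⟨hηb.1, hηb.2⟩ ⟨hμb.1, hμb.2⟩ (by linarith)
    have h1 : (m k₀ : ℝ) * Real.arcsin (η k₀) < (m k₀ : ℝ) * Real.arcsin (μ k₀) := by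
      apply mul_lt_mul_of_pos_left this
      exact_mod_cast hm
    exact add_lt_add_of_lt_of_le h1 (Finset.sum_le_sum fun j _ => hsumle j)
  · have hηb := hη.2 k₀ i hMi
    have hμb := hμ.2 k₀ i hMi
    rw [abs_le] at hηb hμb
    have harc : Real.arcsin (η k₀ - η i) < Real.arcsin (μ k₀ - μ i) :=
      Real.strictMonoOn_arcsin ⟨hηb.1, hηb.2⟩ ⟨hμb.1, hμb.2⟩ (by linarith)
    have h2 : ∑ j, (M k₀ j : ℝ) * Real.arcsin (η k₀ - η j)
        < ∑ j, (M k₀ j : ℝ) * Real.arcsin (μ k₀ - μ j) := by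
      apply Finset.sum_lt_sum (fun j _ => hsumle j)
      exact ⟨i, Finset.mem_univ i, by
        apply mul_lt_mul_of_pos_left harc; exact_mod_cast hMi⟩
    exact add_lt_add_of_le_of_lt hm1 h2
end

section
/- (Taylor's lemma.) Let θ be a fixed point of the equal-frequency Kuramoto model on G whose stability matrix M(θ) is negative semidefinite. Then for every nontrivial partition of the vertex set into U and its complement Uᶜ (U nonempty and not all vertices), the sum of cos(θ i − θ j) over all edges {i, j} of G with i ∈ U and j ∈ Uᶜ is nonnegative. -/
open Real

/-- A fixed point of the equal-frequency Kuramoto model on the graph `G`. -/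
def IsKuramotoFixedPoint {n : ℕ} (G : SimpleGraph (Fin n)) [DecidableRel G.Adj]
    (θ : Fin n → ℝ) : Prop :=
  ∀ i, ∑ j ∈ G.neighborFinset i, Real.sin (θ i - θ j) = 0

/-- The stability matrix `M(θ)` of a fixed point of the equal-frequency Kuramoto model. -/
noncomputable def stabMatrix {n : ℕ} (G : SimpleGraph (Fin n)) [DecidableRel G.Adj]
    (K : ℝ) (θ : Fin n → ℝ) : Matrix (Fin n) (Fin n) ℝ :=
  Matrix.of fun i j =>
    if i = j then -∑ k ∈ G.neighborFinset i, K * Real.cos (θ i - θ k)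
    else if G.Adj i j then K * Real.cos (θ i - θ j) else 0

/-- Taylor's lemma. -/
theorem taylor_lemma {n : ℕ} (G : SimpleGraph (Fin n)) [DecidableRel G.Adj]
    (K : ℝ) (hK : 0 < K) (θ : Fin n → ℝ)
    (hfix : IsKuramotoFixedPoint G θ)
    (hstab : (-(stabMatrix G K θ)).PosSemidef)
    (U : Finset (Fin n)) (hU : U.Nonempty) (hU' : U ≠ Finset.univ) :
    0 ≤ ∑ i ∈ U, ∑ j ∈ Uᶜ, if G.Adj i j then Real.cos (θ i - θ j) else 0 := by
  classical
  set c : Fin n → Fin n → ℝ := fun i j => if G.Adj i j then Real.cos (θ i - θ j) else 0 with hc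
  set x : Fin n → ℝ := fun i => if i ∈ U then 1 else 0 with hx
  have hdiag : ∀ i, stabMatrix G K θ i i = -(K * ∑ j, c i j) := by
    intro i
    simp only [stabMatrix, Matrix.of_apply, if_pos rfl, neg_inj]
    rw [SimpleGraph.neighborFinset_eq_filter, Finset.sum_filter, Finset.mul_sum]
    simp [hc, mul_ite, mul_zero]
  have hstep : ∀ i j, stabMatrix G K θ i j
      = K * c i j + (if j = i then stabMatrix G K θ i i else 0) := by
    intro i j
    by_cases h : j = i
    · subst h
      simp [hc, stabMatrix, G.irrefl]
    · have h' : i ≠ j := fun e => h e.symm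
      simp [stabMatrix, Matrix.of_apply, if_neg h', h, hc, mul_ite, mul_zero]
  have hrow : ∀ i ∈ U, ∑ j ∈ U, stabMatrix G K θ i j = -K * ∑ j ∈ Uᶜ, c i j := by
    intro i hi
    have : ∑ j ∈ U, stabMatrix G K θ i j
        = ∑ j ∈ U, (K * c i j + (if j = i then stabMatrix G K θ i i else 0)) := by
      exact Finset.sum_congr rfl fun j _ => hstep i j
    rw [this, Finset.sum_add_distrib, Finset.sum_ite_eq' U i, if_pos hi, hdiag i]
    have hsplit : ∑ j, c i j = ∑ j ∈ U, c i j + ∑ j ∈ Uᶜ, c i j :=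
      (Finset.sum_add_sum_compl U (c i)).symm
    rw [hsplit, ← Finset.mul_sum]
    ring
  have h := hstab.dotProduct_mulVec_nonneg x
  have hdot : dotProduct (star x) ((-(stabMatrix G K θ)).mulVec x)
      = K * ∑ i ∈ U, ∑ j ∈ Uᶜ, c i j := by
    simp only [star_trivial, dotProduct, Matrix.mulVec, Matrix.neg_apply, hx,
      ite_mul, mul_ite, mul_one, mul_zero, zero_mul, one_mul,
      Finset.sum_ite_mem, Finset.univ_inter]
    rw [Finset.mul_sum]
    refine Finset.sum_congr rfl fun i hi => ?_
    rw [Finset.sum_neg_distrib, hrow i hi]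
    ring
  rw [hdot] at h
  have := (mul_nonneg_iff_of_pos_left hK).mp h
  simpa [hc] using this
end

section
/- Suppose that in G no two vertices of degree at least 3 are adjacent, i.e., for every edge {i, j} of G at least one of the endpoints has degree at most 2. Let θ be a fixed point of the equal-frequency Kuramoto model on G whose stability matrix M(θ) is negative semidefinite. Then cos(θ i − θ j) ≥ 0 for every pair of adjacent vertices i ~ j; equivalently, all angle differences of the stable fixed point lie in [−π/2, π/2] modulo 2π. -/
open Real

lemma quad_form_aux {n : ℕ} (A : Matrix (Fin n) (Fin n) ℝ)
    (hA : A.PosSemidef) (i j : Fin n) (t : ℝ) :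
    0 ≤ t * (A i i * t + A i j) + (A j i * t + A j j) := by
  have h := hA.dotProduct_mulVec_nonneg ((Pi.single i t + Pi.single j 1 : Fin n → ℝ))
  simp [Matrix.mulVec_add, add_dotProduct, mul_add, add_mul] at h
  nlinarith [h]

lemma diag_aux {n : ℕ} (G : SimpleGraph (Fin n)) [DecidableRel G.Adj]
    (K : ℝ) (θ : Fin n → ℝ) (i : Fin n) :
    (-(stabMatrix G K θ)) i i = ∑ k ∈ G.neighborFinset i, K * Real.cos (θ i - θ k) := by
  simp [stabMatrix]

lemma off_aux {n : ℕ} (G : SimpleGraph (Fin n)) [DecidableRel G.Adj]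
    (K : ℝ) (θ : Fin n → ℝ) {i j : Fin n} (h : G.Adj i j) :
    (-(stabMatrix G K θ)) i j = -(K * Real.cos (θ i - θ j)) := by
  simp [stabMatrix, h, h.ne]

lemma no_psd_aux (c d : ℝ) (hc : 0 < c)
    (h : 0 ≤ (-(d + 1) / (2 * c)) * (0 * (-(d + 1) / (2 * c)) + c)
        + (c * (-(d + 1) / (2 * c)) + d)) : False := by
  have ht : (-(d + 1) / (2 * c)) * c = -(d + 1) / 2 := by
    field_simp
  nlinarith [h, ht]

lemma key_aux {n : ℕ} (G : SimpleGraph (Fin n)) [DecidableRel G.Adj]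
    (K : ℝ) (hK : 0 < K) (θ : Fin n → ℝ)
    (hfix : IsKuramotoFixedPoint G θ)
    (hstab : (-(stabMatrix G K θ)).PosSemidef)
    {i j : Fin n} (hadj : G.Adj i j) (hdi : G.degree i ≤ 2) :
    0 ≤ Real.cos (θ i - θ j) := by
  by_contra hneg
  push_neg at hneg
  have hjN : j ∈ G.neighborFinset i := by simpa using hadj
  have hdiag : 0 ≤ (-(stabMatrix G K θ)) i i := by
    have h := quad_form_aux _ hstab i i 0
    nlinarith [h]
  have hij : i ≠ j := hadj.ne
  have hcard : (G.neighborFinset i).card ≤ 2 := by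
    rwa [← SimpleGraph.card_neighborFinset_eq_degree] at hdi
  have hcard1 : 1 ≤ (G.neighborFinset i).card := Finset.card_pos.mpr ⟨j, hjN⟩
  have hcases : (G.neighborFinset i).card = 1 ∨ (G.neighborFinset i).card = 2 := by omega
  rcases hcases with h | h
  · -- degree 1 : neighborFinset i = {j}
    obtain ⟨a, ha⟩ := Finset.card_eq_one.mp h
    have haj : a = j := by
      rw [ha, Finset.mem_singleton] at hjN; exact hjN.symm
    subst haj
    have hv : (-(stabMatrix G K θ)) i i = K * Real.cos (θ i - θ a) := by
      rw [diag_aux, ha, Finset.sum_singleton]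
    nlinarith
  · -- degree 2
    obtain ⟨a, b, hab, hset⟩ := Finset.card_eq_two.mp h
    have hex : ∃ k, k ≠ j ∧ G.neighborFinset i = {j, k} := by
      rw [hset, Finset.mem_insert, Finset.mem_singleton] at hjN
      rcases hjN with rfl | rfl
      · exact ⟨b, hab.symm, hset⟩
      · exact ⟨a, hab, by rw [hset, Finset.pair_comm]⟩
    obtain ⟨k, hkj, hNik⟩ := hex
    have hsin : Real.sin (θ i - θ j) + Real.sin (θ i - θ k) = 0 := by
      have := hfix i
      rwa [hNik, Finset.sum_pair (Ne.symm hkj)] at this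
    have hAii : (-(stabMatrix G K θ)) i i
        = K * Real.cos (θ i - θ j) + K * Real.cos (θ i - θ k) := by
      rw [diag_aux, hNik, Finset.sum_pair (Ne.symm hkj)]
    set x := θ i - θ j with hxdef
    set y := θ i - θ k with hydef
    have hcos_sum : 0 ≤ Real.cos x + Real.cos y := by nlinarith [hdiag, hAii]
    have hsinb : Real.sin y = -Real.sin x := by linarith
    have hsinsq : Real.sin y ^ 2 = Real.sin x ^ 2 := by rw [hsinb]; ring
    have hsq : Real.cos y ^ 2 = Real.cos x ^ 2 := by
      nlinarith [Real.sin_sq_add_cos_sq x, Real.sin_sq_add_cos_sq y, hsinsq]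
    have hcosb : Real.cos y = -Real.cos x := by
      nlinarith [hcos_sum, hneg, hsq]
    have hAii0 : (-(stabMatrix G K θ)) i i = 0 := by rw [hAii, hcosb]; ring
    have hAij : (-(stabMatrix G K θ)) i j = -(K * Real.cos x) := off_aux G K θ hadj
    have hAji : (-(stabMatrix G K θ)) j i = -(K * Real.cos x) := by
      rw [off_aux G K θ hadj.symm]
      have hrw : θ j - θ i = -x := by rw [hxdef]; ring
      rw [hrw, Real.cos_neg]
    set c := -(K * Real.cos x) with hc
    have hcpos : 0 < c := by rw [hc]; nlinarith
    obtain ⟨d, hd⟩ : ∃ d : ℝ, (-(stabMatrix G K θ)) j j = d := ⟨_, rfl⟩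
    have hq := quad_form_aux _ hstab i j (-(d + 1) / (2 * c))
    rw [hAii0, hAij, hAji, hd] at hq
    exact no_psd_aux c d hcpos hq

/-- Lemma 2 of the paper: if no two vertices of degree at least 3 are adjacent, every
stable fixed point has all its angle differences in `[-π/2, π/2]`. -/
theorem stable_fixed_points_have_small_angle_differences
    {n : ℕ} (G : SimpleGraph (Fin n)) [DecidableRel G.Adj]
    (hdeg : ∀ i j, G.Adj i j → G.degree i ≤ 2 ∨ G.degree j ≤ 2)
    (K : ℝ) (hK : 0 < K) (θ : Fin n → ℝ)
    (hfix : IsKuramotoFixedPoint G θ)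
    (hstab : (-(stabMatrix G K θ)).PosSemidef) :
    ∀ i j, G.Adj i j → 0 ≤ Real.cos (θ i - θ j) := by
  intro i j hadj
  rcases hdeg i j hadj with hd | hd
  · exact key_aux G K hK θ hfix hstab hadj hd
  · have h := key_aux G K hK θ hfix hstab hadj.symm hd
    have hrw : θ j - θ i = -(θ i - θ j) := by ring
    rwa [hrw, Real.cos_neg] at h
end

section
/- Let j be a vertex of G with exactly two neighbors i and k. Let θ be a fixed point of the equal-frequency Kuramoto model on G whose stability matrix M(θ) is negative semidefinite. Then cos(θ j − θ i) ≥ 0 and cos(θ j − θ k) ≥ 0. -/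
open Real

private lemma quad_aux {n : ℕ} (A : Matrix (Fin n) (Fin n) ℝ) (hA : A.PosSemidef)
    (i j : Fin n) (t : ℝ) :
    0 ≤ A i i + t * A i j + t * A j i + t * t * A j j := by
  have h := hA.dotProduct_mulVec_nonneg ((Pi.single i 1 : Fin n → ℝ) + t • (Pi.single j 1 : Fin n → ℝ))
  simp only [star_trivial, Matrix.mulVec_add, Matrix.mulVec_smul, Matrix.mulVec_single,
    dotProduct_add, add_dotProduct, smul_dotProduct,
    single_dotProduct, dotProduct_smul, smul_eq_mul, Pi.add_apply, Pi.smul_apply,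
    Pi.single_apply, Matrix.col_apply, MulOpposite.op_one, one_smul] at h
  ring_nf at h ⊢; linarith

private lemma one_side {n : ℕ} (G : SimpleGraph (Fin n)) [DecidableRel G.Adj]
    (K : ℝ) (hK : 0 < K) (θ : Fin n → ℝ)
    (hfix : IsKuramotoFixedPoint G θ)
    (hstab : (-(stabMatrix G K θ)).PosSemidef)
    (j i k : Fin n) (hik : i ≠ k)
    (hnbrs : G.neighborFinset j = {i, k}) :
    0 ≤ Real.cos (θ j - θ i) := by
  classical
  set a := Real.cos (θ j - θ i) with ha
  set b := Real.cos (θ j - θ k) with hb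
  set A := -(stabMatrix G K θ) with hA
  have hji : G.Adj j i := by
    rw [← SimpleGraph.mem_neighborFinset, hnbrs]; simp
  have hijne : i ≠ j := hji.ne'
  -- diagonal entry at j
  have hAjj : A j j = K * a + K * b := by
    simp only [hA, Matrix.neg_apply, stabMatrix, Matrix.of_apply, if_pos rfl, hnbrs,
      Finset.sum_pair hik, neg_neg, if_true]
    rfl
  -- off-diagonal entry
  have hAij : A i j = -(K * a) := by
    simp only [hA, Matrix.neg_apply, stabMatrix, Matrix.of_apply, if_neg hijne,
      if_pos hji.symm]
    rw [← neg_sub (θ j) (θ i), Real.cos_neg]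
  have hAji : A j i = -(K * a) := by
    simp only [hA, Matrix.neg_apply, stabMatrix, Matrix.of_apply, if_neg hijne.symm,
      if_pos hji]
    rfl
  -- fixed point equation at j
  have hsin : Real.sin (θ j - θ i) + Real.sin (θ j - θ k) = 0 := by
    have := hfix j
    rwa [hnbrs, Finset.sum_pair hik] at this
  have hsq : a ^ 2 = b ^ 2 := by
    have h1 := Real.sin_sq_add_cos_sq (θ j - θ i)
    have h2 := Real.sin_sq_add_cos_sq (θ j - θ k)
    have hs : Real.sin (θ j - θ i) ^ 2 = Real.sin (θ j - θ k) ^ 2 := by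
      have : Real.sin (θ j - θ i) = -Real.sin (θ j - θ k) := by linarith
      rw [this]; ring
    rw [ha, hb]; linarith
  -- a + b ≥ 0 from the diagonal
  have hdiag : 0 ≤ K * a + K * b := by
    have := quad_aux A hstab j j 0
    simp only [mul_zero, zero_mul, add_zero] at this
    rwa [hAjj] at this
  by_contra hneg
  push_neg at hneg
  have hb0 : b = -a := by nlinarith [hdiag, hsq, hK]
  have hjj0 : A j j = 0 := by rw [hAjj, hb0]; ring
  have hc : 0 < -(K * a) * 2 := by nlinarith
  have hq := quad_aux A hstab i j (-(A i i + 1) / (-(K * a) * 2))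
  rw [hAij, hAji, hjj0] at hq
  have hK' : K ≠ 0 := ne_of_gt hK
  have ha' : a ≠ 0 := ne_of_lt hneg
  have : A i i + (-(A i i + 1) / (-(K * a) * 2)) * (-(K * a)) * 2 = -1 := by
    field_simp
    ring
  nlinarith [hq, this]

/-- At a degree-2 vertex of a stable fixed point, both incident angle differences have
nonnegative cosine. -/
theorem degree_two_vertex_nonneg_cosines
    {n : ℕ} (G : SimpleGraph (Fin n)) [DecidableRel G.Adj]
    (K : ℝ) (hK : 0 < K) (θ : Fin n → ℝ)
    (hfix : IsKuramotoFixedPoint G θ)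
    (hstab : (-(stabMatrix G K θ)).PosSemidef)
    (j i k : Fin n) (hik : i ≠ k)
    (hnbrs : G.neighborFinset j = {i, k}) :
    0 ≤ Real.cos (θ j - θ i) ∧ 0 ≤ Real.cos (θ j - θ k) := by
  refine ⟨one_side G K hK θ hfix hstab j i k hik hnbrs, ?_⟩
  rw [Finset.pair_comm] at hnbrs
  exact one_side G K hK θ hfix hstab j k i hik.symm hnbrs
end

section
/- Let n ≥ 3 and let θ : Fin n → ℝ be a fixed point of the equal-frequency Kuramoto model on the cycle graph C_n, i.e., sin(θ j − θ (j−1)) + sin(θ j − θ (j+1)) = 0 for every j (indices modulo n). For each j let Δ j ∈ (−π, π] be the representative of θ (j+1) − θ j modulo 2π, and suppose Δ j ∈ [−π/2, π/2] for every j. Then all the Δ j are equal, and their common value is 2π q / n for some integer q with |q| ≤ n/4; in particular there are at most 2·⌊n/4⌋ + 1 such fixed points up to a global rotation of all angles. -/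
open Real

private lemma kuramoto_step (n : ℕ) [NeZero n] (θ Δ : Fin n → ℝ)
    (hfix : ∀ j : Fin n, Real.sin (θ j - θ (j - 1)) + Real.sin (θ j - θ (j + 1)) = 0)
    (hΔ : ∀ j : Fin n, ∃ z : ℤ, θ (j + 1) - θ j = Δ j + 2 * π * z)
    (hhalf : ∀ j : Fin n, Δ j ∈ Set.Icc (-(π / 2)) (π / 2))
    (j : Fin n) : Δ j = Δ (j + 1) := by
  obtain ⟨z1, hz1⟩ := hΔ j
  obtain ⟨z2, hz2⟩ := hΔ (j + 1)
  have h := hfix (j + 1)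
  rw [add_sub_cancel_right] at h
  have e1 : θ (j + 1) - θ j = Δ j + z1 * (2 * π) := by rw [hz1]; ring
  have e2 : θ (j + 1) - θ (j + 1 + 1) = -(Δ (j + 1) + z2 * (2 * π)) := by
    rw [show θ (j+1) - θ (j+1+1) = -(θ (j+1+1) - θ (j+1)) by ring, hz2]; ring
  rw [e1, e2, Real.sin_add_int_mul_two_pi, Real.sin_neg, Real.sin_add_int_mul_two_pi] at h
  exact Real.injOn_sin (hhalf j) (hhalf (j + 1)) (by linarith)

open Fin.CommRing in
private lemma kuramoto_all_eq (n : ℕ) [NeZero n] (θ Δ : Fin n → ℝ)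
    (hfix : ∀ j : Fin n, Real.sin (θ j - θ (j - 1)) + Real.sin (θ j - θ (j + 1)) = 0)
    (hΔ : ∀ j : Fin n, ∃ z : ℤ, θ (j + 1) - θ j = Δ j + 2 * π * z)
    (hhalf : ∀ j : Fin n, Δ j ∈ Set.Icc (-(π / 2)) (π / 2))
    (j j' : Fin n) : Δ j = Δ j' := by
  have key : ∀ (k : ℕ) (i : Fin n), Δ (i + (k : Fin n)) = Δ i := by
    intro k
    induction k with
    | zero => intro i; simp
    | succ k ih =>
      intro i
      have hcast : ((k + 1 : ℕ) : Fin n) = (k : Fin n) + 1 := by push_cast; ring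
      rw [hcast, ← add_assoc, ← kuramoto_step n θ Δ hfix hΔ hhalf (i + (k : Fin n))]
      exact ih i
  have := key (j' - j).val j
  rw [Fin.cast_val_eq_self, show j + (j' - j) = j' by ring] at this; exact this.symm

private lemma kuramoto_winding (n : ℕ) [NeZero n] (θ Δ : Fin n → ℝ)
    (hΔ : ∀ j : Fin n, ∃ z : ℤ, θ (j + 1) - θ j = Δ j + 2 * π * z)
    (hhalf : ∀ j : Fin n, Δ j ∈ Set.Icc (-(π / 2)) (π / 2))
    (d : ℝ) (hd : ∀ j : Fin n, Δ j = d) :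
    ∃ q : ℤ, d = 2 * π * q / n ∧ |(q : ℝ)| ≤ (n : ℝ) / 4 := by
  choose z hz using hΔ
  have hsum : ∑ j : Fin n, (θ (j + 1) - θ j) = 0 := by
    rw [Finset.sum_sub_distrib,
      Fintype.sum_equiv (Equiv.addRight (1 : Fin n)) (fun j => θ (j + 1)) θ (fun j => rfl),
      sub_self]
  have hsum2 : (n : ℝ) * d + 2 * π * (∑ j : Fin n, (z j : ℝ)) = 0 := by
    have : ∑ j : Fin n, (θ (j + 1) - θ j) = ∑ j : Fin n, (Δ j + 2 * π * z j) :=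
      Finset.sum_congr rfl fun j _ => hz j
    rw [hsum] at this
    simp only [hd, Finset.sum_add_distrib, Finset.sum_const, Finset.card_univ,
      Fintype.card_fin, nsmul_eq_mul, ← Finset.mul_sum] at this
    linarith
  have hn0 : (0:ℝ) < n := Nat.cast_pos.mpr (Nat.pos_of_ne_zero (NeZero.ne n))
  refine ⟨-∑ j : Fin n, z j, ?_, ?_⟩
  · push_cast
    field_simp
    linarith
  · have hq : (((-∑ j : Fin n, z j : ℤ)) : ℝ) = (n : ℝ) * d / (2 * π) := by
      push_cast
      field_simp
      nlinarith [pi_pos]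
    have hdb : |d| ≤ π / 2 := by
      have := hhalf 0; rw [hd 0] at this; exact abs_le.mpr ⟨this.1, this.2⟩
    rw [hq, abs_div, abs_mul, abs_of_pos hn0, abs_of_pos (by positivity : (0:ℝ) < 2 * π)]
    rw [div_le_div_iff₀ (by positivity) (by norm_num)]
    calc (n:ℝ) * |d| * 4 ≤ (n:ℝ) * (π/2) * 4 := by nlinarith [abs_nonneg d]
    _ = n * (2 * π) := by ring

theorem single_cycle_fixed_points_with_small_angle_differences
    (n : ℕ) [NeZero n] (hn : 3 ≤ n) (θ : Fin n → ℝ)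
    (hfix : ∀ j : Fin n,
      Real.sin (θ j - θ (j - 1)) + Real.sin (θ j - θ (j + 1)) = 0)
    (Δ : Fin n → ℝ)
    (hΔ : ∀ j : Fin n, Δ j ∈ Set.Ioc (-π) π ∧
      ∃ z : ℤ, θ (j + 1) - θ j = Δ j + 2 * π * z)
    (hhalf : ∀ j : Fin n, Δ j ∈ Set.Icc (-(π / 2)) (π / 2)) :
    ((∀ j j' : Fin n, Δ j = Δ j') ∧
      ∃ q : ℤ, (∀ j : Fin n, Δ j = 2 * π * q / n) ∧ |(q : ℝ)| ≤ (n : ℝ) / 4) ∧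
    ({d : ℝ | ∃ (θ' Δ' : Fin n → ℝ),
        (∀ j : Fin n,
          Real.sin (θ' j - θ' (j - 1)) + Real.sin (θ' j - θ' (j + 1)) = 0) ∧
        (∀ j : Fin n, Δ' j ∈ Set.Ioc (-π) π ∧
          ∃ z : ℤ, θ' (j + 1) - θ' j = Δ' j + 2 * π * z) ∧
        (∀ j : Fin n, Δ' j ∈ Set.Icc (-(π / 2)) (π / 2)) ∧
        (∀ j : Fin n, Δ' j = d)}.ncard ≤ 2 * (n / 4) + 1) := by
  have heq := kuramoto_all_eq n θ Δ hfix (fun j => (hΔ j).2) hhalf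
  constructor
  · refine ⟨heq, ?_⟩
    obtain ⟨q, hq, hqb⟩ := kuramoto_winding n θ Δ (fun j => (hΔ j).2) hhalf (Δ 0)
      (fun j => heq j 0)
    exact ⟨q, fun j => (heq j 0).trans hq, hqb⟩
  · -- cardinality bound
    set m : ℤ := ((n / 4 : ℕ) : ℤ) with hm
    have hsub : {d : ℝ | ∃ (θ' Δ' : Fin n → ℝ),
        (∀ j : Fin n,
          Real.sin (θ' j - θ' (j - 1)) + Real.sin (θ' j - θ' (j + 1)) = 0) ∧
        (∀ j : Fin n, Δ' j ∈ Set.Ioc (-π) π ∧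
          ∃ z : ℤ, θ' (j + 1) - θ' j = Δ' j + 2 * π * z) ∧
        (∀ j : Fin n, Δ' j ∈ Set.Icc (-(π / 2)) (π / 2)) ∧
        (∀ j : Fin n, Δ' j = d)} ⊆
        ↑((Finset.Icc (-m) m).image (fun q : ℤ => 2 * π * q / n)) := by
      rintro d ⟨θ', Δ', _, hΔ', hhalf', hd'⟩
      obtain ⟨q, hq, hqb⟩ := kuramoto_winding n θ' Δ' (fun j => (hΔ' j).2) hhalf' d hd'
      simp only [Finset.coe_image, Set.mem_image, Finset.mem_coe, Finset.mem_Icc]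
      refine ⟨q, ?_, hq.symm⟩
      have hna : q.natAbs ≤ n / 4 := by
        rw [Nat.le_div_iff_mul_le (by norm_num)]
        have : (q.natAbs : ℝ) * 4 ≤ n := by
          rw [Nat.cast_natAbs]
          push_cast
          nlinarith [hqb]
        exact_mod_cast this
      rw [hm]
      omega
    calc ({d : ℝ | ∃ (θ' Δ' : Fin n → ℝ),
        (∀ j : Fin n,
          Real.sin (θ' j - θ' (j - 1)) + Real.sin (θ' j - θ' (j + 1)) = 0) ∧
        (∀ j : Fin n, Δ' j ∈ Set.Ioc (-π) π ∧
          ∃ z : ℤ, θ' (j + 1) - θ' j = Δ' j + 2 * π * z) ∧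
        (∀ j : Fin n, Δ' j ∈ Set.Icc (-(π / 2)) (π / 2)) ∧
        (∀ j : Fin n, Δ' j = d)}).ncard
        ≤ ((Finset.Icc (-m) m).image (fun q : ℤ => 2 * π * q / n)).card := by
          rw [← Set.ncard_coe_finset]
          exact Set.ncard_le_ncard hsub (Finset.finite_toSet _)
      _ ≤ (Finset.Icc (-m) m).card := Finset.card_image_le
      _ = 2 * (n / 4) + 1 := by
          rw [Int.card_Icc]
          simp only [m]
          omega
end
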